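/- arXiv:2003.06759 — 9 statements merged into one kernel-verified Lean document; each statement's English description precedes it below -/
import Mathlib

section
/- For every vertex v of the associated directed graph Γ̃, the number of vertices w with a normal-arrow v ⟶ w equals the number of vertices u with a dashed-arrow v ⇢ u. -/
/-!
Removing a vertex `v` from a finite graph with `e` edges leaves `e - deg v` edges, so summing the
edge counts of all `n` vertex-deleted subgraphs gives `(n - 2) e`. Since `Γ − v ≅ Γ' − f v` for
every `v` and `n ≥ 3`, this forces `e(Γ) = e(Γ')` and then `deg v = deg (f v)`.

Transport everything to `Γ − v` through `φ_v`: with `S` the neighbours of `v` and `T` the vertices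
sent by `φ_v` to neighbours of `f v`, the normal-arrow targets of `v` are `T \ S` and the
dashed-arrow targets are `f⁻¹ (φ_v (S \ T))`. As `|S| = deg v` and
`|T| = deg (f v)` agree, so do `|T \ S|` and `|S \ T|`.
-/

/-- Property (*): a bijection `f` between the vertex sets together with, for every vertex `v`,
a fixed isomorphism `φ v` from `Γ − v` onto `Γ' − f v` (encoded as an adjacency-preserving
bijection between the vertex sets with `v`, resp. `f v`, removed). -/
structure RCSetup {V V' : Type*} (G : SimpleGraph V) (G' : SimpleGraph V') where
  f : V ≃ V'
  φ : ∀ v : V, {w : V // w ≠ v} ≃ {w' : V' // w' ≠ f v}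
  adj_iff : ∀ (v : V) (x y : {w : V // w ≠ v}),
    G.Adj x.1 y.1 ↔ G'.Adj (φ v x).1 (φ v y).1

variable {V V' : Type*} {G : SimpleGraph V} {G' : SimpleGraph V'}

/-- There is a normal-arrow `v₁ ⟶ v₂` in the associated directed graph. -/
def RCSetup.Normal (H : RCSetup G G') (v₁ v₂ : V) : Prop :=
  ∃ h : v₂ ≠ v₁, ¬ G.Adj v₁ v₂ ∧ G'.Adj (H.f v₁) (H.φ v₁ ⟨v₂, h⟩).1

/-- There is a dashed-arrow `v₁ ⇢ v₂` in the associated directed graph. -/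
def RCSetup.Dashed (H : RCSetup G G') (v₁ v₂ : V) : Prop :=
  ∃ h : H.f v₂ ≠ H.f v₁, ¬ G'.Adj (H.f v₁) (H.f v₂) ∧ G.Adj v₁ ((H.φ v₁).symm ⟨H.f v₂, h⟩).1

open Finset

theorem Set.ncard_sdiff_comm {α : Type*} [Finite α] {s t : Set α} (h : s.ncard = t.ncard) :
    (s \ t).ncard = (t \ s).ncard := by
  have hs := Set.ncard_inter_add_ncard_sdiff_eq_ncard s t
  have ht := Set.ncard_inter_add_ncard_sdiff_eq_ncard t s
  rw [Set.inter_comm] at ht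
  omega

namespace SimpleGraph

theorem ncard_setOf_adj_subtype_ne (v : V) :
    {x : {w // w ≠ v} | G.Adj v x}.ncard = (G.neighborSet v).ncard :=
  Set.ncard_preimage_of_injective_subset_range Subtype.val_injective
    (fun w hw => ⟨⟨w, (G.ne_of_adj hw).symm⟩, rfl⟩)

variable [Fintype V] [DecidableEq V] [DecidableRel G.Adj]

section

variable (G)

theorem card_edgeFinset_induce_compl_singleton_add_degree (v : V) :
    #(G.induce {v}ᶜ).edgeFinset + G.degree v = #G.edgeFinset := by
  rw [card_edgeFinset_induce_compl_singleton, card_edgeFinset_deleteIncidenceSet]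
  exact Nat.sub_add_cancel (G.degree_le_card_edgeFinset v)

theorem sum_card_edgeFinset_induce_compl_singleton_add :
    ∑ v, #(G.induce {v}ᶜ).edgeFinset + 2 * #G.edgeFinset = Fintype.card V * #G.edgeFinset := by
  rw [← sum_degrees_eq_twice_card_edges, ← Finset.sum_add_distrib]
  simp [card_edgeFinset_induce_compl_singleton_add_degree]

end

variable [Fintype V'] [DecidableEq V'] [DecidableRel G'.Adj]

theorem card_edgeFinset_eq_of_card_edgeFinset_induce_compl_singleton_eq (f : V ≃ V')
    (hV : 3 ≤ Fintype.card V)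
    (h : ∀ v, #(G.induce {v}ᶜ).edgeFinset = #(G'.induce {f v}ᶜ).edgeFinset) :
    #G.edgeFinset = #G'.edgeFinset := by
  have hsum := G.sum_card_edgeFinset_induce_compl_singleton_add
  have hsum' := G'.sum_card_edgeFinset_induce_compl_singleton_add
  rw [Fintype.sum_congr _ _ h, Equiv.sum_comp f (fun v' => #(G'.induce {v'}ᶜ).edgeFinset)] at hsum
  rw [← Fintype.card_congr f] at hsum'
  refine Nat.eq_of_mul_eq_mul_left (by omega : 0 < Fintype.card V - 2) ?_
  rw [Nat.sub_mul, Nat.sub_mul]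
  omega

theorem degree_eq_of_card_edgeFinset_induce_compl_singleton_eq (f : V ≃ V')
    (hV : 3 ≤ Fintype.card V)
    (h : ∀ v, #(G.induce {v}ᶜ).edgeFinset = #(G'.induce {f v}ᶜ).edgeFinset) (v : V) :
    G.degree v = G'.degree (f v) := by
  have hv := G.card_edgeFinset_induce_compl_singleton_add_degree v
  have hv' := G'.card_edgeFinset_induce_compl_singleton_add_degree (f v)
  have hedges := card_edgeFinset_eq_of_card_edgeFinset_induce_compl_singleton_eq f hV h
  have hdeleted := h v
  omega

end SimpleGraph

namespace RCSetup

variable (H : RCSetup G G')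

def isoInduceComplSingleton (v : V) : G.induce {v}ᶜ ≃g G'.induce {H.f v}ᶜ where
  toEquiv := H.φ v
  map_rel_iff' := (H.adj_iff v _ _).symm

theorem ncard_neighborSet_eq [Fintype V] [Fintype V'] (hV : 3 ≤ Fintype.card V) (v : V) :
    (G.neighborSet v).ncard = (G'.neighborSet (H.f v)).ncard := by
  classical
  rw [← Nat.card_coe_set_eq, ← Nat.card_coe_set_eq, Nat.card_eq_fintype_card,
    Nat.card_eq_fintype_card, SimpleGraph.card_neighborSet_eq_degree,
    SimpleGraph.card_neighborSet_eq_degree]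
  exact SimpleGraph.degree_eq_of_card_edgeFinset_induce_compl_singleton_eq H.f hV
    (fun u => (H.isoInduceComplSingleton u).card_edgeFinset_eq) v

theorem ncard_setOf_adj_φ (v : V) :
    {x : {w // w ≠ v} | G'.Adj (H.f v) (H.φ v x)}.ncard = (G'.neighborSet (H.f v)).ncard :=
  Set.ncard_preimage_of_injective_subset_range (Subtype.val_injective.comp (H.φ v).injective)
    (fun w' hw' => ⟨(H.φ v).symm ⟨w', (G'.ne_of_adj hw').symm⟩, by simp⟩)

theorem setOf_normal_eq_image (v : V) :
    {w | H.Normal v w} = Subtype.val ''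
      ({x | G'.Adj (H.f v) (H.φ v x)} \ {x : {w // w ≠ v} | G.Adj v x}) := by
  ext w
  constructor
  · rintro ⟨hw, hnadj, hadj'⟩
    exact ⟨⟨w, hw⟩, ⟨hadj', hnadj⟩, rfl⟩
  · rintro ⟨x, ⟨hadj', hnadj⟩, rfl⟩
    exact ⟨x.2, hnadj, hadj'⟩

theorem setOf_dashed_eq_image (v : V) :
    {u | H.Dashed v u} = (fun x => H.f.symm (H.φ v x)) ''
      ({x : {w // w ≠ v} | G.Adj v x} \ {x | G'.Adj (H.f v) (H.φ v x)}) := by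
  ext u
  constructor
  · rintro ⟨hu, hnadj', hadj⟩
    refine ⟨(H.φ v).symm ⟨H.f u, hu⟩, ⟨hadj, ?_⟩, ?_⟩ <;> simp [hnadj']
  · rintro ⟨x, ⟨hadj, hnadj'⟩, rfl⟩
    refine ⟨by simpa using (H.φ v x).2, by simpa using hnadj', ?_⟩
    simpa using hadj

end RCSetup

theorem stmt_0_general [Fintype V] [Fintype V']
    (h3 : 3 ≤ Fintype.card V)
    (H : RCSetup G G') (v : V) :
    {w : V | H.Normal v w}.ncard = {u : V | H.Dashed v u}.ncard := by
  have hinj : Function.Injective fun x : {w // w ≠ v} => H.f.symm (H.φ v x) :=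
    H.f.symm.injective.comp (Subtype.val_injective.comp (H.φ v).injective)
  rw [H.setOf_normal_eq_image, H.setOf_dashed_eq_image,
    Set.ncard_image_of_injective _ Subtype.val_injective, Set.ncard_image_of_injective _ hinj]
  refine Set.ncard_sdiff_comm ?_
  rw [SimpleGraph.ncard_setOf_adj_subtype_ne, H.ncard_setOf_adj_φ, H.ncard_neighborSet_eq h3]

/-- For every vertex `v`, the number of vertices `w` with a normal-arrow `v ⟶ w` equals the
number of vertices `u` with a dashed-arrow `v ⇢ u`. -/
theorem stmt_0 [Fintype V] [Fintype V']
    (h3 : 3 ≤ Fintype.card V) (h3' : 3 ≤ Fintype.card V')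
    (H : RCSetup G G') (v : V) :
    {w : V | H.Normal v w}.ncard = {u : V | H.Dashed v u}.ncard :=
  stmt_0_general h3 H v
end

section
/- For any vertex v ∈ V(Γ), the following are equivalent: (i) there is no normal-arrow arising from v in the associated directed graph Γ̃ (and hence no dashed-arrow arising from v); (ii) the isomorphism φ_v : Γ−v → Γ'−f(v) extends to an isomorphism Φ : Γ → Γ' with Φ restricted to V(Γ)∖{v} equal to φ_v and Φ(v) = f(v). -/
variable {V V' : Type*} {G : SimpleGraph V} {G' : SimpleGraph V'}

open Finset SimpleGraph

open scoped Classical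

theorem SimpleGraph.card_edgeFinset_induce_compl_singleton_add_degree_s1 [Fintype V]
    (G : SimpleGraph V) (v : V) :
    #(G.induce {v}ᶜ).edgeFinset + G.degree v = #G.edgeFinset := by
  rw [card_edgeFinset_induce_compl_singleton, card_edgeFinset_deleteIncidenceSet,
    Nat.sub_add_cancel (G.degree_le_card_edgeFinset v)]

theorem SimpleGraph.adj_iff_of_degree_eq [Fintype V] [Fintype V'] (Ψ : V ≃ V') {v : V}
    (hdeg : G.degree v = G'.degree (Ψ v)) (himp : ∀ w, G'.Adj (Ψ v) (Ψ w) → G.Adj v w)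
    (w : V) : G.Adj v w ↔ G'.Adj (Ψ v) (Ψ w) := by
  set S := (G'.neighborFinset (Ψ v)).map Ψ.symm.toEmbedding
  have hS : S ⊆ G.neighborFinset v := by
    intro u hu
    obtain ⟨u', hu', rfl⟩ := Finset.mem_map.mp hu
    rw [mem_neighborFinset] at hu' ⊢
    exact himp _ (by simpa using hu')
  have hSeq : S = G.neighborFinset v :=
    Finset.eq_of_subset_of_card_le hS (by simp [S, hdeg])
  rw [← mem_neighborFinset, ← hSeq]
  simp [S]

namespace RCSetup

def induceIso (H : RCSetup G G') (v : V) : G.induce {v}ᶜ ≃g G'.induce {H.f v}ᶜ :=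
  ⟨H.φ v, (H.adj_iff v _ _).symm⟩

theorem card_edgeFinset_add_degree [Fintype V] [Fintype V'] (H : RCSetup G G') (v : V) :
    #G.edgeFinset + G'.degree (H.f v) = #G'.edgeFinset + G.degree v := by
  have h := G.card_edgeFinset_induce_compl_singleton_add_degree_s1 v
  have h' := G'.card_edgeFinset_induce_compl_singleton_add_degree_s1 (H.f v)
  rw [(H.induceIso v).card_edgeFinset_eq] at h
  omega

theorem card_edgeFinset_eq [Fintype V] [Fintype V'] (H : RCSetup G G')
    (hV : 3 ≤ Fintype.card V) :
    #G.edgeFinset = #G'.edgeFinset := by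
  have hsum := Finset.sum_congr rfl fun v (_ : v ∈ univ) => H.card_edgeFinset_add_degree v
  simp only [sum_add_distrib, sum_const, card_univ, smul_eq_mul,
    H.f.sum_comp (fun w => G'.degree w), sum_degrees_eq_twice_card_edges] at hsum
  have : (Fintype.card V - 2) * #G.edgeFinset = (Fintype.card V - 2) * #G'.edgeFinset := by
    rw [Nat.sub_mul, Nat.sub_mul]
    omega
  exact Nat.eq_of_mul_eq_mul_left (by omega) this

theorem degree_eq [Fintype V] [Fintype V'] (H : RCSetup G G') (hV : 3 ≤ Fintype.card V)
    (v : V) :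
    G.degree v = G'.degree (H.f v) := by
  have := H.card_edgeFinset_add_degree v
  rw [H.card_edgeFinset_eq hV] at this
  omega

noncomputable def extend (H : RCSetup G G') (v : V) : V ≃ V' :=
  (Equiv.optionSubtypeNe v).symm.trans
    ((Equiv.optionCongr (H.φ v)).trans (Equiv.optionSubtypeNe (H.f v)))

@[simp]
theorem extend_self (H : RCSetup G G') (v : V) : H.extend v v = H.f v := by
  simp [extend]

theorem extend_of_ne (H : RCSetup G G') {v w : V} (h : w ≠ v) :
    H.extend v w = (H.φ v ⟨w, h⟩).1 := by
  simp [extend, Equiv.optionSubtypeNe_symm_of_ne h]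

theorem extend_adj_extend_of_ne (H : RCSetup G G') {v a b : V} (ha : a ≠ v) (hb : b ≠ v) :
    G'.Adj (H.extend v a) (H.extend v b) ↔ G.Adj a b := by
  rw [H.extend_of_ne ha, H.extend_of_ne hb]
  exact (H.adj_iff v ⟨a, ha⟩ ⟨b, hb⟩).symm

theorem forall_not_normal_iff (H : RCSetup G G') (v : V) :
    (∀ w, ¬ H.Normal v w) ↔ ∀ w, G'.Adj (H.extend v v) (H.extend v w) → G.Adj v w := by
  refine forall_congr' fun w => ?_
  by_cases hwv : w = v
  · subst hwv
    simp [Normal]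
  · simp only [Normal, H.extend_self, H.extend_of_ne hwv, ne_eq, hwv, not_false_eq_true,
      exists_true_left, not_and]
    exact not_imp_not

noncomputable def extendIso (H : RCSetup G G') (v : V)
    (hv : ∀ w, G.Adj v w ↔ G'.Adj (H.extend v v) (H.extend v w)) : G ≃g G' where
  toEquiv := H.extend v
  map_rel_iff' {a b} := by
    by_cases ha : a = v <;> by_cases hb : b = v
    · simp [ha, hb]
    · subst ha
      exact (hv b).symm
    · subst hb
      rw [G.adj_comm, G'.adj_comm]
      exact (hv a).symm
    · exact H.extend_adj_extend_of_ne ha hb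

end RCSetup

theorem stmt_1_general [Fintype V] [Fintype V']
    (h3 : 3 ≤ Fintype.card V)
    (H : RCSetup G G') (v : V) :
    (∀ w : V, ¬ H.Normal v w) ↔
      ∃ Φ : G ≃g G', (∀ (w : V) (h : w ≠ v), Φ w = (H.φ v ⟨w, h⟩).1) ∧ Φ v = H.f v := by
  constructor
  · intro hN
    have hv := adj_iff_of_degree_eq (H.extend v) (by rw [H.extend_self]; exact H.degree_eq h3 v)
      ((H.forall_not_normal_iff v).mp hN)
    exact ⟨H.extendIso v hv, fun w h => H.extend_of_ne h, H.extend_self v⟩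
  · rintro ⟨Φ, hΦ, hΦv⟩ w ⟨hw, hna, hadj⟩
    exact hna (Φ.map_adj_iff.mp (by rwa [hΦv, hΦ w hw]))

/-- For a vertex `v`, there is no normal-arrow arising from `v` in the associated directed graph
iff the isomorphism `φ v : Γ − v → Γ' − f v` extends to an isomorphism `Φ : Γ → Γ'` with
`Φ(v) = f(v)`. -/
theorem stmt_1 [Fintype V] [Fintype V']
    (h3 : 3 ≤ Fintype.card V) (h3' : 3 ≤ Fintype.card V')
    (H : RCSetup G G') (v : V) :
    (∀ w : V, ¬ H.Normal v w) ↔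
      ∃ Φ : G ≃g G', (∀ (w : V) (h : w ≠ v), Φ w = (H.φ v ⟨w, h⟩).1) ∧ Φ v = H.f v :=
  stmt_1_general h3 H v
end

section
/- Suppose that for some positive integer k and vertices v₁, …, v_{2k} ∈ V(Γ̃) there are arrows v_{2i−1} ⟶ v_{2i} and v_{2i} ⇢ v_{2i+1} in Γ̃ for every i = 1, …, k (where v_{2k+1} := v₁), and suppose the cycle v₁, …, v_{2k} is α-type. Then there exist normal-arrows v₁ ⟶ v₂ and v₂ ⟶ v₁ in Γ̃. -/
variable {V V' : Type*} {G : SimpleGraph V} {G' : SimpleGraph V'}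

open Classical

/-- Partial version of `φ v`: defined on every vertex except `v` itself. -/
noncomputable def RCSetup.pphi (H : RCSetup G G') (v x : V) : Option V' :=
  if h : x ≠ v then some (H.φ v ⟨x, h⟩).1 else none

/-- Partial version of `(φ v)⁻¹`: defined on every vertex except `f v` itself. -/
noncomputable def RCSetup.pphiInv (H : RCSetup G G') (v : V) (x' : V') : Option V :=
  if h : x' ≠ H.f v then some ((H.φ v).symm ⟨x', h⟩).1 else none

/-- The `j`-th (partial) map in the alternating composition attached to a cycle `w`:
`φ_{w j}` if `j` is odd and `φ_{w j}⁻¹` if `j` is even, acting on the disjoint union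
`V ⊕ V'`. -/
noncomputable def RCSetup.step (H : RCSetup G G') (w : ℕ → V) (j : ℕ) : V ⊕ V' → Option (V ⊕ V')
  | Sum.inl x => if j % 2 = 1 then (H.pphi (w j) x).map Sum.inr else none
  | Sum.inr x' => if j % 2 = 0 then (H.pphiInv (w j) x').map Sum.inl else none

/-- `chainDown H w lo m z` applies the partial maps `step (lo+m-1), …, step (lo+1), step lo`
to `z`, innermost first (so `step lo` is applied last, i.e. outermost). -/
noncomputable def RCSetup.chainDown (H : RCSetup G G') (w : ℕ → V) (lo : ℕ) :
    ℕ → Option (V ⊕ V') → Option (V ⊕ V')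
  | 0, z => z
  | (m + 1), z => H.chainDown w lo m (z.bind (H.step w (lo + m)))

/-- The innermost argument used to compute the `i`-th term of the sequences attached to a
cycle `w`: `w i` if `i` is even, and `f (w i)` if `i` is odd. -/
noncomputable def RCSetup.inner (H : RCSetup G G') (w : ℕ → V) (i : ℕ) : V ⊕ V' :=
  if i % 2 = 0 then Sum.inl (w i) else Sum.inr (H.f (w i))

/-- The partial sequence `(b'_i)` in `V'` attached to a cycle `w` (starting at `w 1`):
`b'_1 = f (w 1)`, `b'_2 = φ_{w 1}(w 2)`, `b'_3 = φ_{w 1}(φ_{w 2}⁻¹(f (w 3)))`, …;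
a term is `none` whenever some intermediate value is outside the domain of the next map. -/
noncomputable def RCSetup.bSeq' (H : RCSetup G G') (w : ℕ → V) (i : ℕ) : Option V' :=
  match H.chainDown w 1 (i - 1) (some (H.inner w i)) with
  | some (Sum.inr y) => some y
  | _ => none

/-- The partial sequence `(b_i)` in `V` attached to a cycle `w` (starting at `w 1`):
`b_1 = w 2`, `b_2 = φ_{w 2}⁻¹(f (w 3))`, `b_3 = φ_{w 2}⁻¹(φ_{w 3}(w 4))`, …. -/
noncomputable def RCSetup.bSeq (H : RCSetup G G') (w : ℕ → V) (i : ℕ) : Option V :=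
  match H.chainDown w 2 (i - 1) (some (H.inner w (i + 1))) with
  | some (Sum.inl y) => some y
  | _ => none

/-- Cyclic reading of the vertices `v 1, …, v (2k)` of a cycle: `cyc k v m = v m` for
`1 ≤ m ≤ 2k`, extended `2k`-periodically (in particular `cyc k v 0 = v (2k)`). -/
def cyc (k : ℕ) (v : ℕ → V) (m : ℕ) : V := v ((m + 2 * k - 1) % (2 * k) + 1)

/-- The cycle `v 1, …, v (2k)` (with alternate normal- and dashed-arrows) is α-type:
there is `n₀ ≥ 1` such that for every `t = 0, …, k−1`, the sequences `b'^{(2t)}` and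
`b^{(2t+1)}` obtained by starting the cycle at `v (2t+1)` are defined exactly for
`1 ≤ i ≤ n₀`, with `b'^{(2t)}_{n₀} = f (v (2t))` and `b^{(2t+1)}_{n₀} = v (2t+1)`
(indices mod `2k`, `v 0 := v (2k)`). -/
def RCSetup.AlphaType (H : RCSetup G G') (k : ℕ) (v : ℕ → V) : Prop :=
  ∃ n₀ : ℕ, 1 ≤ n₀ ∧ ∀ t : ℕ, t < k →
    (∀ i : ℕ, 1 ≤ i → i ≤ n₀ →
        (H.bSeq' (fun j => cyc k v (2 * t + j)) i).isSome ∧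
        (H.bSeq (fun j => cyc k v (2 * t + j)) i).isSome) ∧
    (∀ i : ℕ, n₀ < i →
        H.bSeq' (fun j => cyc k v (2 * t + j)) i = none ∧
        H.bSeq (fun j => cyc k v (2 * t + j)) i = none) ∧
    H.bSeq' (fun j => cyc k v (2 * t + j)) n₀ = some (H.f (cyc k v (2 * t))) ∧
    H.bSeq (fun j => cyc k v (2 * t + j)) n₀ = some (cyc k v (2 * t + 1))

/-! Each `φ_w` and `φ_w⁻¹` is a partial isomorphism, so every composite of them maps adjacent
vertices of `Γ ⊕ Γ'` to adjacent vertices. The arrows of the cycle say exactly that the innermost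
arguments of two consecutive terms `b'_n`, `b'_{n+1}` are adjacent after one map, hence
consecutive terms of every `b'`-sequence are adjacent in `Γ'`. Peeling off the outermost map
gives `b_n = φ_{v₂}⁻¹(b'^{(2)}_{n-1})`, so α-type forces `b'^{(2)}_{n₀-1} = φ_{v₂}(v₁)` and
`b'^{(2)}_{n₀} = f(v₂)`: their adjacency is the edge required by the arrow `v₂ ⟶ v₁`. -/

lemma cyc_eq_of_modEq {k : ℕ} (hk : 0 < k) (v : ℕ → V) {a b : ℕ} (h : a ≡ b [MOD 2 * k]) :
    cyc k v a = cyc k v b := by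
  have h' : a + (2 * k - 1) ≡ b + (2 * k - 1) [MOD 2 * k] := h.add_right _
  unfold cyc
  rw [Nat.add_sub_assoc (by omega), Nat.add_sub_assoc (by omega), h']

namespace RCSetup

variable (H : RCSetup G G')

lemma pphi_eq_some_iff {v x : V} {x' : V'} :
    H.pphi v x = some x' ↔ ∃ hx : x ≠ v, (H.φ v ⟨x, hx⟩).1 = x' := by
  unfold pphi
  split_ifs with hx <;> simp [hx]

lemma pphiInv_eq_some_iff {v x : V} {x' : V'} :
    H.pphiInv v x' = some x ↔ ∃ hx : x ≠ v, (H.φ v ⟨x, hx⟩).1 = x' := by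
  unfold pphiInv
  split_ifs with hx'
  · simp only [Option.some.injEq]
    constructor
    · rintro rfl
      exact ⟨((H.φ v).symm ⟨x', hx'⟩).2, by simp⟩
    · rintro ⟨hx, rfl⟩
      simp
  · simp only [false_iff, not_exists]
    intro hx hφ
    exact (H.φ v ⟨x, hx⟩).2 (hφ.trans (not_not.mp hx'))

lemma pphi_adj {v x y : V} {x' y' : V'} (hx : H.pphi v x = some x') (hy : H.pphi v y = some y')
    (hxy : G.Adj x y) : G'.Adj x' y' := by
  obtain ⟨hxv, rfl⟩ := H.pphi_eq_some_iff.mp hx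
  obtain ⟨hyv, rfl⟩ := H.pphi_eq_some_iff.mp hy
  exact (H.adj_iff v ⟨x, hxv⟩ ⟨y, hyv⟩).mp hxy

lemma pphiInv_adj {v x y : V} {x' y' : V'} (hx : H.pphiInv v x' = some x)
    (hy : H.pphiInv v y' = some y) (hxy : G'.Adj x' y') : G.Adj x y := by
  obtain ⟨hxv, rfl⟩ := H.pphiInv_eq_some_iff.mp hx
  obtain ⟨hyv, rfl⟩ := H.pphiInv_eq_some_iff.mp hy
  exact (H.adj_iff v ⟨x, hxv⟩ ⟨y, hyv⟩).mpr hxy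

lemma step_adj (w : ℕ → V) (j : ℕ) {x y a b : V ⊕ V'}
    (hx : H.step w j x = some a) (hy : H.step w j y = some b)
    (hxy : (G ⊕g G').Adj x y) : (G ⊕g G').Adj a b := by
  rcases x with x | x <;> rcases y with y | y <;> simp only [SimpleGraph.sum_adj] at hxy <;>
    simp only [step] at hx hy <;> split_ifs at hx hy <;>
    simp only [Option.map_eq_some_iff] at hx hy
  · obtain ⟨x', hx, rfl⟩ := hx
    obtain ⟨y', hy, rfl⟩ := hy
    exact H.pphi_adj hx hy hxy
  · obtain ⟨x', hx, rfl⟩ := hx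
    obtain ⟨y', hy, rfl⟩ := hy
    exact H.pphiInv_adj hx hy hxy

lemma chainDown_none (w : ℕ → V) (lo m : ℕ) : H.chainDown w lo m none = none := by
  induction m with
  | zero => rfl
  | succ m ih => exact ih

lemma chainDown_adj (w : ℕ → V) (lo m : ℕ) {x y a b : V ⊕ V'}
    (hx : H.chainDown w lo m (some x) = some a) (hy : H.chainDown w lo m (some y) = some b)
    (hxy : (G ⊕g G').Adj x y) : (G ⊕g G').Adj a b := by
  induction m generalizing x y with
  | zero =>
    cases hx
    cases hy
    exact hxy
  | succ m ih =>
    simp only [chainDown, Option.bind_some] at hx hy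
    rcases hx' : H.step w (lo + m) x with _ | x'
    · simp [hx', chainDown_none] at hx
    rcases hy' : H.step w (lo + m) y with _ | y'
    · simp [hy', chainDown_none] at hy
    rw [hx'] at hx
    rw [hy'] at hy
    exact ih hx hy (H.step_adj w (lo + m) hx' hy' hxy)

lemma chainDown_succ (w : ℕ → V) (lo m : ℕ) (z : Option (V ⊕ V')) :
    H.chainDown w lo (m + 1) z = (H.chainDown w (lo + 1) m z).bind (H.step w lo) := by
  induction m generalizing z with
  | zero => rfl
  | succ m ih =>
    rw [chainDown, ih, chainDown, Nat.add_right_comm lo 1 m]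
    rfl

lemma step_shift (w : ℕ → V) (j : ℕ) :
    H.step (fun i => w (i + 2)) j = H.step w (j + 2) := by
  funext x
  cases x <;> simp [step, Nat.add_mod_right]

lemma chainDown_shift (w : ℕ → V) (lo m : ℕ) :
    H.chainDown (fun i => w (i + 2)) lo m = H.chainDown w (lo + 2) m := by
  induction m with
  | zero => rfl
  | succ m ih =>
    funext z
    rw [chainDown, chainDown, ih, step_shift, Nat.add_right_comm lo 2 m]

lemma inner_shift (w : ℕ → V) (i : ℕ) :
    H.inner (fun j => w (j + 2)) i = H.inner w (i + 2) := by
  simp [inner, Nat.add_mod_right]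

lemma bSeq'_eq_some_iff (w : ℕ → V) (i : ℕ) (a : V') :
    H.bSeq' w i = some a ↔ H.chainDown w 1 (i - 1) (some (H.inner w i)) = some (Sum.inr a) := by
  unfold bSeq'
  split <;> simp_all

lemma bSeq_one (w : ℕ → V) : H.bSeq w 1 = some (w 2) := by
  simp [bSeq, chainDown, inner]

lemma bSeq_eq_bind_bSeq' (w : ℕ → V) (m : ℕ) :
    H.bSeq w (m + 2) = (H.bSeq' (fun j => w (j + 2)) (m + 1)).bind (H.pphiInv (w 2)) := by
  unfold bSeq bSeq'
  rw [show m + 2 - 1 = m + 1 from rfl, Nat.add_sub_cancel, chainDown_succ, chainDown_shift,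
    inner_shift]
  rcases H.chainDown w (2 + 1) m (some (H.inner w (m + 1 + 2))) with _ | x | y
  · rfl
  · rfl
  · simp only [Option.bind_some, step]
    cases H.pphiInv (w 2) y <;> rfl

lemma inner_adj_of_step_inner_succ (w : ℕ → V)
    (hN : ∀ j, j % 2 = 1 → H.Normal (w j) (w (j + 1)))
    (hD : ∀ j, j % 2 = 0 → H.Dashed (w j) (w (j + 1))) (j : ℕ) {z : V ⊕ V'}
    (hz : H.step w j (H.inner w (j + 1)) = some z) : (G ⊕g G').Adj (H.inner w j) z := by
  rcases Nat.mod_two_eq_zero_or_one j with hj | hj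
  · obtain ⟨hne, -, hadj⟩ := hD j hj
    have hj' : (j + 1) % 2 = 1 := by omega
    simp only [inner, step, hj, hj', pphiInv, dif_pos hne, Option.map_some, if_true,
      one_ne_zero, if_false, Option.some.injEq] at hz ⊢
    subst hz
    exact hadj
  · obtain ⟨hne, -, hadj⟩ := hN j hj
    have hj' : (j + 1) % 2 = 0 := by omega
    simp only [inner, step, hj, hj', pphi, dif_pos hne, Option.map_some, if_true,
      one_ne_zero, if_false, Option.some.injEq] at hz ⊢
    subst hz
    exact hadj

lemma bSeq'_adj (w : ℕ → V) (hN : ∀ j, j % 2 = 1 → H.Normal (w j) (w (j + 1)))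
    (hD : ∀ j, j % 2 = 0 → H.Dashed (w j) (w (j + 1))) (m : ℕ) {a b : V'}
    (ha : H.bSeq' w (m + 1) = some a) (hb : H.bSeq' w (m + 2) = some b) : G'.Adj a b := by
  rw [bSeq'_eq_some_iff, Nat.add_sub_cancel] at ha
  rw [bSeq'_eq_some_iff, show m + 2 - 1 = m + 1 from rfl] at hb
  simp only [chainDown, Option.bind_some] at hb
  rcases hz : H.step w (1 + m) (H.inner w (m + 1 + 1)) with _ | z
  · simp [hz, chainDown_none] at hb
  rw [hz] at hb
  rw [Nat.add_comm 1 m] at hz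
  exact H.chainDown_adj w 1 m ha hb (H.inner_adj_of_step_inner_succ w hN hD (m + 1) hz)

lemma cyc_arrows {k : ℕ} (hk : 0 < k) (v : ℕ → V)
    (harr : ∀ i : ℕ, 1 ≤ i → i ≤ k →
      H.Normal (cyc k v (2 * i - 1)) (cyc k v (2 * i)) ∧
      H.Dashed (cyc k v (2 * i)) (cyc k v (2 * i + 1))) (j : ℕ) :
    (j % 2 = 1 → H.Normal (cyc k v j) (cyc k v (j + 1))) ∧
    (j % 2 = 0 → H.Dashed (cyc k v j) (cyc k v (j + 1))) := by
  -- `r + 1` is the representative of `j` in `[1, 2k]`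
  set r := (j + (2 * k - 1)) % (2 * k)
  have hr : r < 2 * k := Nat.mod_lt _ (by omega)
  have hrj : r + 1 ≡ j [MOD 2 * k] := calc
    r + 1 ≡ j + (2 * k - 1) + 1 [MOD 2 * k] := (Nat.mod_modEq _ _).add_right 1
    _ = j + 2 * k := by omega
    _ ≡ j [MOD 2 * k] := Nat.add_modEq_right
  have hpar : (r + 1) % 2 = j % 2 := hrj.of_mul_right k
  rw [cyc_eq_of_modEq hk v hrj.symm, cyc_eq_of_modEq hk v (hrj.add_right 1).symm]
  constructor
  · intro hj
    have := (harr (r / 2 + 1) (by omega) (by omega)).1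
    rwa [show 2 * (r / 2 + 1) - 1 = r + 1 by omega, show 2 * (r / 2 + 1) = r + 1 + 1 by omega]
      at this
  · intro hj
    have := (harr ((r + 1) / 2) (by omega) (by omega)).2
    rwa [show 2 * ((r + 1) / 2) = r + 1 by omega] at this

end RCSetup

theorem stmt_4_general
    (H : RCSetup G G') (k : ℕ) (hk : 0 < k) (v : ℕ → V)
    (harr : ∀ i : ℕ, 1 ≤ i → i ≤ k →
      H.Normal (cyc k v (2 * i - 1)) (cyc k v (2 * i)) ∧
      H.Dashed (cyc k v (2 * i)) (cyc k v (2 * i + 1)))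
    (hα : H.AlphaType k v) :
    H.Normal (cyc k v 1) (cyc k v 2) ∧ H.Normal (cyc k v 2) (cyc k v 1) := by
  have h12 : H.Normal (cyc k v 1) (cyc k v 2) := (harr 1 le_rfl hk).1
  refine ⟨h12, ?_⟩
  obtain ⟨hne, hnadj, -⟩ := h12
  obtain ⟨n₀, hn₀, hT⟩ := hα
  have h2 : 2 ≡ 2 * (1 % k) [MOD 2 * k] := by
    rw [← Nat.mul_mod_mul_left]
    exact (Nat.mod_modEq _ _).symm
  set w := fun j => cyc k v (2 * (1 % k) + j)
  have hw : (fun j => cyc k v (j + 2)) = w := by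
    funext j
    exact cyc_eq_of_modEq hk v (by rw [Nat.add_comm]; exact h2.add_right j)
  have hb := (hT 0 hk).2.2.2
  simp only [mul_zero, zero_add] at hb
  obtain ⟨m, rfl⟩ : ∃ m, n₀ = m + 2 := by
    refine ⟨n₀ - 2, by_contra fun h => hne ?_⟩
    rw [show n₀ = 1 by omega, H.bSeq_one] at hb
    exact Option.some.inj hb
  rw [H.bSeq_eq_bind_bSeq', hw, Option.bind_eq_some_iff] at hb
  obtain ⟨y, hy, hyv⟩ := hb
  obtain ⟨hne', rfl⟩ := H.pphiInv_eq_some_iff.mp hyv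
  have hf := (hT (1 % k) (Nat.mod_lt 1 hk)).2.2.1
  rw [cyc_eq_of_modEq hk v h2.symm] at hf
  have hnormal : ∀ j, j % 2 = 1 → H.Normal (w j) (w (j + 1)) := fun j hj =>
    (H.cyc_arrows hk v harr (2 * (1 % k) + j)).1 (by omega)
  have hdashed : ∀ j, j % 2 = 0 → H.Dashed (w j) (w (j + 1)) := fun j hj =>
    (H.cyc_arrows hk v harr (2 * (1 % k) + j)).2 (by omega)
  exact ⟨hne', fun h => hnadj h.symm, (H.bSeq'_adj w hnormal hdashed m hy hf).symm⟩

/-- If `v 1, …, v (2k)` is a cycle with alternate normal-arrows `v_{2i−1} ⟶ v_{2i}` and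
dashed-arrows `v_{2i} ⇢ v_{2i+1}` (indices cyclic) and the cycle is α-type, then there are
normal-arrows `v₁ ⟶ v₂` and `v₂ ⟶ v₁`. -/
theorem stmt_4 [Fintype V] [Fintype V']
    (h3 : 3 ≤ Fintype.card V) (h3' : 3 ≤ Fintype.card V')
    (H : RCSetup G G') (k : ℕ) (hk : 0 < k) (v : ℕ → V)
    (harr : ∀ i : ℕ, 1 ≤ i → i ≤ k →
      H.Normal (cyc k v (2 * i - 1)) (cyc k v (2 * i)) ∧
      H.Dashed (cyc k v (2 * i)) (cyc k v (2 * i + 1)))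
    (hα : H.AlphaType k v) :
    H.Normal (cyc k v 1) (cyc k v 2) ∧ H.Normal (cyc k v 2) (cyc k v 1) :=
  stmt_4_general H k hk v harr hα
end

section
/- Let n ≥ 3 and B, C ⊆ {1,…,n−1}, let A = A(n;B,C) with vertices a₁,…,a_n, let A' = A(n;C,B) with vertices b₁,…,b_n, and set a'_i := b_{n−i+1}. Then the map a_i ↦ a'_{n−i+2} (for i = 2,…,n) is a graph isomorphism from A−a₁ onto A'−a'₁, and the map a_i ↦ a'_{n−i} (for i = 1,…,n−1) is a graph isomorphism from A−a_n onto A'−a'_n, where A−v denotes the induced subgraph on the vertex set with v removed. -/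
/-- The defining relation of the graph `A(n;B,C)`: with vertices `a₁, …, a_n` encoded as
`Fin n` (so `a_i` is the element with value `i − 1`), for `i < j` the pair `a_i a_j` is
related iff (`i` is odd and `j − i ∈ B`) or (`i` is even and `j − i ∈ C`). -/
def ARel (n : ℕ) (B C : Finset ℕ) (x y : Fin n) : Prop :=
  x.val < y.val ∧
    ((Odd (x.val + 1) ∧ y.val - x.val ∈ B) ∨ (Even (x.val + 1) ∧ y.val - x.val ∈ C))

instance (n : ℕ) (B C : Finset ℕ) : DecidableRel (ARel n B C) := fun x y => by
  unfold ARel; infer_instance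

/-- The graph `A(n;B,C)` on the vertex set `{a₁, …, a_n}` (encoded as `Fin n`, with
`a_i ↦ i − 1`): for `1 ≤ i < j ≤ n`, `a_i a_j` is an edge iff (`i` is odd and `j − i ∈ B`)
or (`i` is even and `j − i ∈ C`). -/
def AGraph (n : ℕ) (B C : Finset ℕ) : SimpleGraph (Fin n) :=
  SimpleGraph.fromRel (ARel n B C)

instance (n : ℕ) (B C : Finset ℕ) : DecidableRel (AGraph n B C).Adj := fun x y =>
  decidable_of_iff _ (SimpleGraph.fromRel_adj (ARel n B C) x y).symm

/- Shifting both endpoints up by one preserves their difference and flips the parity of the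
lower one, so it exchanges the roles of `B` and `C`. -/
theorem ARel_iff_of_val_eq_succ {n : ℕ} (B C : Finset ℕ) {x y x' y' : Fin n}
    (hx : x.val = x'.val + 1) (hy : y.val = y'.val + 1) :
    ARel n B C x y ↔ ARel n C B x' y' := by
  have hodd : Odd (x.val + 1) ↔ Even (x'.val + 1) := by
    rw [hx, Nat.odd_add_one, Nat.not_odd_iff_even]
  have heven : Even (x.val + 1) ↔ Odd (x'.val + 1) := by
    rw [hx, Nat.even_add_one, Nat.not_even_iff_odd]
  have hdiff : y.val - x.val = y'.val - x'.val := by omega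
  unfold ARel
  rw [hodd, heven, hdiff, or_comm]
  exact and_congr_left' (by omega)

theorem AGraph_adj_iff_of_val_eq_succ {n : ℕ} (B C : Finset ℕ) {x y x' y' : Fin n}
    (hx : x.val = x'.val + 1) (hy : y.val = y'.val + 1) :
    (AGraph n B C).Adj x y ↔ (AGraph n C B).Adj x' y' := by
  have hne : x ≠ y ↔ x' ≠ y' := by simp only [ne_eq, Fin.ext_iff]; omega
  simp only [AGraph, SimpleGraph.fromRel_adj]
  rw [hne, ARel_iff_of_val_eq_succ B C hx hy, ARel_iff_of_val_eq_succ B C hy hx]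

def AGraph.shiftDownIso (n : ℕ) (B C : Finset ℕ) :
    (AGraph n B C).induce {x : Fin n | 1 ≤ x.val} ≃g
      (AGraph n C B).induce {x : Fin n | x.val < n - 1} where
  toFun x := ⟨⟨x.1.val - 1, by omega⟩, Nat.sub_lt_sub_right x.2 x.1.isLt⟩
  invFun x := ⟨⟨x.1.val + 1, Nat.add_lt_of_lt_sub x.2⟩, Nat.le_add_left 1 _⟩
  left_inv x := Subtype.ext (Fin.ext (Nat.sub_add_cancel x.2))
  right_inv x := Subtype.ext (Fin.ext (Nat.add_sub_cancel x.1.val 1))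
  map_rel_iff' {x y} :=
    (AGraph_adj_iff_of_val_eq_succ B C (x := x.1) (y := y.1)
      (Nat.sub_add_cancel x.2).symm (Nat.sub_add_cancel y.2).symm).symm

theorem stmt_7_general (n : ℕ) (B C : Finset ℕ) :
    (∃ ψ : (AGraph n B C).induce {x : Fin n | 1 ≤ x.val} ≃g
           (AGraph n C B).induce {x : Fin n | x.val < n - 1},
        ∀ (x : Fin n) (hx : 1 ≤ x.val), (ψ ⟨x, hx⟩).1.1 = x.val - 1) ∧
    (∃ ψ : (AGraph n B C).induce {x : Fin n | x.val < n - 1} ≃g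
           (AGraph n C B).induce {x : Fin n | 1 ≤ x.val},
        ∀ (x : Fin n) (hx : x.val < n - 1), (ψ ⟨x, hx⟩).1.1 = x.val + 1) :=
  ⟨⟨AGraph.shiftDownIso n B C, fun _ _ => rfl⟩,
    ⟨(AGraph.shiftDownIso n C B).symm, fun _ _ => rfl⟩⟩

/-- Let `A = A(n;B,C)` with vertices `a₁, …, a_n` and `A' = A(n;C,B)` with vertices
`b₁, …, b_n`, and set `a'_i := b_{n−i+1}` (so as elements of `Fin n`, `a_i` has value
`i − 1` and `a'_i` has value `n − i`).  Then `a_i ↦ a'_{n−i+2}` (for `i = 2, …, n`, i.e.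
value `t ↦ t − 1`) is a graph isomorphism from `A − a₁` onto `A' − a'₁`, and
`a_i ↦ a'_{n−i}` (for `i = 1, …, n−1`, i.e. value `t ↦ t + 1`) is a graph isomorphism
from `A − a_n` onto `A' − a'_n`. -/
theorem stmt_7 (n : ℕ) (hn : 3 ≤ n) (B C : Finset ℕ)
    (hB : ∀ b ∈ B, 1 ≤ b ∧ b ≤ n - 1) (hC : ∀ c ∈ C, 1 ≤ c ∧ c ≤ n - 1) :
    (∃ ψ : (AGraph n B C).induce {x : Fin n | 1 ≤ x.val} ≃g
           (AGraph n C B).induce {x : Fin n | x.val < n - 1},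
        ∀ (x : Fin n) (hx : 1 ≤ x.val), (ψ ⟨x, hx⟩).1.1 = x.val - 1) ∧
    (∃ ψ : (AGraph n B C).induce {x : Fin n | x.val < n - 1} ≃g
           (AGraph n C B).induce {x : Fin n | 1 ≤ x.val},
        ∀ (x : Fin n) (hx : x.val < n - 1), (ψ ⟨x, hx⟩).1.1 = x.val + 1) :=
  stmt_7_general n B C
end

section
/- Let n ≥ 3 and b ∈ {1,…,n−1}. Then n−b is odd if and only if for each j = 1, 2 the map a_i ↦ a_{n−i+1} (i = 1,…,n) is a graph automorphism of A_j(b). -/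
/-!
Reversal `a_i ↦ a_{n+1-i}` preserves the difference `d = j - i` of a pair and sends the left
end `i` to `n + 1 - j = n + 1 - i - d`, which has the parity of `i` exactly when `n - d` is odd.
So for odd `n - b` the reversal is an automorphism of every `A(n;B,C)` with `B, C ⊆ {b}`;
conversely the edge `a₁ a_{1+b}` of `A₁(b)` is sent to `a_{n-b} a_n`, an edge only if `n - b` is
odd.
-/

namespace AGraph

variable {n : ℕ} {B C : Finset ℕ}

lemma rel_rev_iff (hB : ∀ d ∈ B, Odd (n - d)) (hC : ∀ d ∈ C, Odd (n - d)) (x y : Fin n) :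
    ARel n B C y.rev x.rev ↔ ARel n B C x y := by
  have hx := x.isLt
  have hy := y.isLt
  simp only [ARel, Fin.val_rev]
  by_cases hxy : x.val < y.val
  · have hdiff : n - (x.val + 1) - (n - (y.val + 1)) = y.val - x.val := by omega
    have hpar : ∀ d ∈ B ∪ C, d = y.val - x.val →
        (Odd (n - (y.val + 1) + 1) ↔ Odd (x.val + 1)) := by
      rintro d hd rfl
      have hodd := (Finset.mem_union.mp hd).elim (hB _) (hC _)
      simp only [Nat.odd_iff] at hodd ⊢
      omega
    simp only [hdiff, ← Nat.not_odd_iff_even]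
    constructor
    · rintro ⟨-, ⟨hodd, hmem⟩ | ⟨hodd, hmem⟩⟩
      · exact ⟨hxy, .inl ⟨(hpar _ (Finset.mem_union_left _ hmem) rfl).mp hodd, hmem⟩⟩
      · exact ⟨hxy, .inr ⟨mt (hpar _ (Finset.mem_union_right _ hmem) rfl).mpr hodd, hmem⟩⟩
    · rintro ⟨-, ⟨hodd, hmem⟩ | ⟨hodd, hmem⟩⟩
      · exact ⟨by omega, .inl ⟨(hpar _ (Finset.mem_union_left _ hmem) rfl).mpr hodd, hmem⟩⟩
      · exact ⟨by omega, .inr ⟨mt (hpar _ (Finset.mem_union_right _ hmem) rfl).mp hodd, hmem⟩⟩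
  · exact ⟨fun h => absurd h.1 (by omega), fun h => absurd h.1 hxy⟩

def revIso (hB : ∀ d ∈ B, Odd (n - d)) (hC : ∀ d ∈ C, Odd (n - d)) :
    AGraph n B C ≃g AGraph n B C where
  toEquiv := Fin.revPerm
  map_rel_iff' {x y} := by
    simp only [AGraph, SimpleGraph.fromRel_adj, Fin.revPerm_apply, ne_eq, Fin.rev_inj,
      rel_rev_iff hB hC, or_comm]

lemma odd_sub_of_adj_rev {d : ℕ} (hdB : d ∈ B) (hdC : d ∉ C) (hd : 0 < d) (hdn : d < n)
    (hrev : ∀ x y, (AGraph n B C).Adj x y → (AGraph n B C).Adj x.rev y.rev) :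
    Odd (n - d) := by
  have hedge : (AGraph n B C).Adj ⟨0, by omega⟩ ⟨d, hdn⟩ :=
    (SimpleGraph.fromRel_adj _ _ _).mpr
      ⟨Fin.ne_of_val_ne hd.ne, .inl ⟨hd, .inl ⟨odd_one, by rwa [Nat.sub_zero]⟩⟩⟩
  obtain ⟨-, ⟨hlt, -⟩ | ⟨-, ⟨hodd, -⟩ | ⟨-, hmem⟩⟩⟩ :=
    (SimpleGraph.fromRel_adj _ _ _).mp (hrev _ _ hedge)
  · simp only [Fin.val_rev] at hlt
    omega
  · simp only [Fin.val_rev] at hodd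
    rwa [show n - (d + 1) + 1 = n - d by omega] at hodd
  · simp only [Fin.val_rev] at hmem
    exact absurd (by rwa [show n - (0 + 1) - (n - (d + 1)) = d by omega] at hmem) hdC

end AGraph

theorem stmt_11_general (n : ℕ) (b : ℕ) (hb1 : 1 ≤ b) (hb2 : b ≤ n - 1) :
    Odd (n - b) ↔
      ((∃ ψ : AGraph n {b} ∅ ≃g AGraph n {b} ∅,
          ∀ x : Fin n, (ψ x).val = n - 1 - x.val) ∧
       (∃ ψ : AGraph n ∅ {b} ≃g AGraph n ∅ {b},
          ∀ x : Fin n, (ψ x).val = n - 1 - x.val)) := by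
  have val_rev (x : Fin n) : x.rev.val = n - 1 - x.val := by rw [Fin.val_rev]; omega
  constructor
  · intro hodd
    have hb : ∀ d ∈ ({b} : Finset ℕ), Odd (n - d) := by simpa using hodd
    have hempty : ∀ d ∈ (∅ : Finset ℕ), Odd (n - d) := by simp
    exact ⟨⟨AGraph.revIso hb hempty, val_rev⟩, ⟨AGraph.revIso hempty hb, val_rev⟩⟩
  · rintro ⟨⟨ψ, hψ⟩, -⟩
    have hψ_rev (x : Fin n) : ψ x = x.rev := Fin.ext ((hψ x).trans (val_rev x).symm)
    refine AGraph.odd_sub_of_adj_rev (Finset.mem_singleton_self b) (Finset.notMem_empty b)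
      hb1 (by omega) fun x y hxy => ?_
    simpa only [hψ_rev] using ψ.map_adj_iff.mpr hxy

/-- For `1 ≤ b ≤ n − 1`, with `A₁(b) = A(n;{b},∅)` and `A₂(b) = A(n;∅,{b})` on vertices
`a₁, …, a_n` (so `a_i` has value `i − 1` in `Fin n`): `n − b` is odd iff for each `j = 1, 2`
the map `a_i ↦ a_{n−i+1}` (i.e. value `t ↦ n − 1 − t`) is a graph automorphism of `A_j(b)`. -/
theorem stmt_11 (n : ℕ) (hn : 3 ≤ n) (b : ℕ) (hb1 : 1 ≤ b) (hb2 : b ≤ n - 1) :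
    Odd (n - b) ↔
      ((∃ ψ : AGraph n {b} ∅ ≃g AGraph n {b} ∅,
          ∀ x : Fin n, (ψ x).val = n - 1 - x.val) ∧
       (∃ ψ : AGraph n ∅ {b} ≃g AGraph n ∅ {b},
          ∀ x : Fin n, (ψ x).val = n - 1 - x.val)) :=
  stmt_11_general n b hb1 hb2
end

section
/- Let n ≥ 3 and b ∈ {1,…,n−1} with n−b even. Then for each j = 1, 2, the map a_i ↦ a_{n−i+2} (i = 2,…,n) is a graph automorphism of A_j(b)−a₁, and the map a_i ↦ a_{n−i} (i = 1,…,n−1) is a graph automorphism of A_j(b)−a_n, where G−v denotes the induced subgraph of G with vertex v removed. -/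
/-
A reflection `t ↦ c - t` sends a pair `t < t + d` to `c - t - d < c - t`, keeping the difference
`d`; when `c - d` is even it also keeps the parity of the lower endpoint, which is all the
adjacency rule of `A(n;B,C)` looks at. For `n - b` even this applies with `c = n` on
`{a₂, …, a_n}` and with `c = n - 2` on `{a₁, …, a_{n-1}}`.
-/

def SimpleGraph.Iso.ofInvolutive {V : Type*} {G : SimpleGraph V} (f : V → V)
    (hf : Function.Involutive f) (hadj : ∀ ⦃x y⦄, G.Adj x y → G.Adj (f x) (f y)) :
    G ≃g G where
  toEquiv := hf.toPerm f
  map_rel_iff' {x y} := by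
    rw [hf.coe_toPerm]
    exact ⟨fun h => by simpa only [hf _] using hadj h, fun h => hadj h⟩

section Reflection

variable {n c : ℕ} {B C : Finset ℕ}

theorem ARel.reflect (hB : ∀ d ∈ B, Even (c - d)) (hC : ∀ d ∈ C, Even (c - d))
    {x y x' y' : Fin n} (hy : y.val ≤ c) (hx' : x'.val = c - x.val) (hy' : y'.val = c - y.val)
    (h : ARel n B C x y) : ARel n B C y' x' := by
  obtain ⟨hlt, hrel⟩ := h
  have hdiff : x'.val - y'.val = y.val - x.val := by omega
  refine ⟨by omega, ?_⟩
  rw [hdiff]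
  rcases hrel with ⟨hodd, hd⟩ | ⟨heven, hd⟩
  · have hcd := hB _ hd
    rw [Nat.odd_iff] at hodd ⊢
    rw [Nat.even_iff] at hcd
    exact Or.inl ⟨by omega, hd⟩
  · have hcd := hC _ hd
    rw [Nat.even_iff] at heven hcd ⊢
    exact Or.inr ⟨by omega, hd⟩

theorem AGraph.adj_reflect (hB : ∀ d ∈ B, Even (c - d)) (hC : ∀ d ∈ C, Even (c - d))
    {x y x' y' : Fin n} (hx : x.val ≤ c) (hy : y.val ≤ c) (hx' : x'.val = c - x.val)
    (hy' : y'.val = c - y.val) (h : (AGraph n B C).Adj x y) : (AGraph n B C).Adj x' y' := by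
  rw [AGraph, SimpleGraph.fromRel_adj] at h ⊢
  obtain ⟨hne, hxy | hyx⟩ := h
  · refine ⟨fun he => hne (Fin.ext ?_), Or.inr (hxy.reflect hB hC hy hx' hy')⟩
    have := congrArg Fin.val he
    omega
  · refine ⟨fun he => hne (Fin.ext ?_), Or.inl (hyx.reflect hB hC hx hy' hx')⟩
    have := congrArg Fin.val he
    omega

theorem AGraph.exists_induce_iso_reflect (hB : ∀ d ∈ B, Even (c - d))
    (hC : ∀ d ∈ C, Even (c - d)) {s : Set (Fin n)} (hs : ∀ x ∈ s, x.val ≤ c)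
    (hmaps : ∀ x ∈ s, ∃ y ∈ s, y.val = c - x.val) :
    ∃ ψ : (AGraph n B C).induce s ≃g (AGraph n B C).induce s,
      ∀ (x : Fin n) (hx : x ∈ s), (ψ ⟨x, hx⟩).1.1 = c - x.val := by
  choose f hfs hf using hmaps
  let g : s → s := fun x => ⟨f x x.2, hfs x x.2⟩
  have hg : Function.Involutive g := fun x => by
    have := hs _ x.2
    ext
    simp only [g, hf]
    omega
  refine ⟨SimpleGraph.Iso.ofInvolutive g hg fun x y h => ?_, fun x hx => hf x hx⟩
  exact AGraph.adj_reflect hB hC (hs _ x.2) (hs _ y.2) (hf _ _) (hf _ _) h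

end Reflection

theorem stmt_12_general (n : ℕ) (b : ℕ)
    (hpar : Even (n - b)) :
    (∃ ψ : (AGraph n {b} ∅).induce {x : Fin n | 1 ≤ x.val} ≃g
           (AGraph n {b} ∅).induce {x : Fin n | 1 ≤ x.val},
        ∀ (x : Fin n) (hx : 1 ≤ x.val), (ψ ⟨x, hx⟩).1.1 = n - x.val) ∧
    (∃ ψ : (AGraph n ∅ {b}).induce {x : Fin n | 1 ≤ x.val} ≃g
           (AGraph n ∅ {b}).induce {x : Fin n | 1 ≤ x.val},
        ∀ (x : Fin n) (hx : 1 ≤ x.val), (ψ ⟨x, hx⟩).1.1 = n - x.val) ∧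
    (∃ ψ : (AGraph n {b} ∅).induce {x : Fin n | x.val < n - 1} ≃g
           (AGraph n {b} ∅).induce {x : Fin n | x.val < n - 1},
        ∀ (x : Fin n) (hx : x.val < n - 1), (ψ ⟨x, hx⟩).1.1 = n - 2 - x.val) ∧
    (∃ ψ : (AGraph n ∅ {b}).induce {x : Fin n | x.val < n - 1} ≃g
           (AGraph n ∅ {b}).induce {x : Fin n | x.val < n - 1},
        ∀ (x : Fin n) (hx : x.val < n - 1), (ψ ⟨x, hx⟩).1.1 = n - 2 - x.val) := by
  have hpar_top : ∀ d ∈ ({b} : Finset ℕ), Even (n - d) := by simpa using hpar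
  have hpar_bot : ∀ d ∈ ({b} : Finset ℕ), Even (n - 2 - d) := by
    obtain ⟨k, hk⟩ := hpar
    simpa using ⟨k - 1, by omega⟩
  have hle_top (x : Fin n) (_ : x ∈ {x : Fin n | 1 ≤ x.val}) : x.val ≤ n := x.isLt.le
  have hmaps_top (x : Fin n) (hx : 1 ≤ x.val) :
      ∃ y ∈ {x : Fin n | 1 ≤ x.val}, y.val = n - x.val :=
    ⟨⟨n - x.val, by omega⟩, show 1 ≤ n - x.val by omega, rfl⟩
  have hle_bot (x : Fin n) (hx : x.val < n - 1) : x.val ≤ n - 2 := by omega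
  have hmaps_bot (x : Fin n) (hx : x.val < n - 1) :
      ∃ y ∈ {x : Fin n | x.val < n - 1}, y.val = n - 2 - x.val :=
    ⟨⟨n - 2 - x.val, by omega⟩, show n - 2 - x.val < n - 1 by omega, rfl⟩
  exact ⟨AGraph.exists_induce_iso_reflect hpar_top (by simp) hle_top hmaps_top,
    AGraph.exists_induce_iso_reflect (by simp) hpar_top hle_top hmaps_top,
    AGraph.exists_induce_iso_reflect hpar_bot (by simp) hle_bot hmaps_bot,
    AGraph.exists_induce_iso_reflect (by simp) hpar_bot hle_bot hmaps_bot⟩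

/-- For `1 ≤ b ≤ n − 1` with `n − b` even, with `A₁(b) = A(n;{b},∅)` and `A₂(b) = A(n;∅,{b})`
on vertices `a₁, …, a_n` (so `a_i` has value `i − 1` in `Fin n`): for each `j = 1, 2`, the map
`a_i ↦ a_{n−i+2}` (`i = 2, …, n`, i.e. value `t ↦ n − t`) is a graph automorphism of
`A_j(b) − a₁`, and the map `a_i ↦ a_{n−i}` (`i = 1, …, n−1`, i.e. value `t ↦ n − 2 − t`) is a
graph automorphism of `A_j(b) − a_n`. -/
theorem stmt_12 (n : ℕ) (hn : 3 ≤ n) (b : ℕ) (hb1 : 1 ≤ b) (hb2 : b ≤ n - 1)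
    (hpar : Even (n - b)) :
    (∃ ψ : (AGraph n {b} ∅).induce {x : Fin n | 1 ≤ x.val} ≃g
           (AGraph n {b} ∅).induce {x : Fin n | 1 ≤ x.val},
        ∀ (x : Fin n) (hx : 1 ≤ x.val), (ψ ⟨x, hx⟩).1.1 = n - x.val) ∧
    (∃ ψ : (AGraph n ∅ {b}).induce {x : Fin n | 1 ≤ x.val} ≃g
           (AGraph n ∅ {b}).induce {x : Fin n | 1 ≤ x.val},
        ∀ (x : Fin n) (hx : 1 ≤ x.val), (ψ ⟨x, hx⟩).1.1 = n - x.val) ∧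
    (∃ ψ : (AGraph n {b} ∅).induce {x : Fin n | x.val < n - 1} ≃g
           (AGraph n {b} ∅).induce {x : Fin n | x.val < n - 1},
        ∀ (x : Fin n) (hx : x.val < n - 1), (ψ ⟨x, hx⟩).1.1 = n - 2 - x.val) ∧
    (∃ ψ : (AGraph n ∅ {b}).induce {x : Fin n | x.val < n - 1} ≃g
           (AGraph n ∅ {b}).induce {x : Fin n | x.val < n - 1},
        ∀ (x : Fin n) (hx : x.val < n - 1), (ψ ⟨x, hx⟩).1.1 = n - 2 - x.val) :=
  stmt_12_general n b hpar
end

section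
/- Let n ≥ 3 and B, C ⊆ {1,…,n−1}, let A = A(n;B,C) with vertices a₁,…,a_n, let A' = A(n;C,B) with vertices b₁,…,b_n, and set a'_i := b_{n−i+1}. Then the following are equivalent: (i) β(A) = γ(A); (ii) |E(A)| = |E(A')|, deg_A a₁ = deg_{A'} a'₁, and deg_A a_n = deg_{A'} a'_n. -/
open Finset

namespace Nat

lemma card_filter_even_range (m : ℕ) : #{k ∈ range m | Even k} = (m + 1) / 2 := by
  induction m with
  | zero => rfl
  | succ m ih =>
    rw [range_add_one, filter_insert]
    rcases Nat.even_or_odd m with h | h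
    · rw [if_pos h, card_insert_of_notMem (by simp), ih]
      rw [Nat.even_iff] at h; omega
    · rw [if_neg (Nat.not_even_iff_odd.2 h), ih]
      rw [Nat.odd_iff] at h; omega

lemma card_filter_odd_range (m : ℕ) : #{k ∈ range m | Odd k} = m / 2 := by
  have h := card_filter_add_card_filter_not (s := range m) (p := Even)
  simp only [Nat.not_even_iff_odd, card_range, card_filter_even_range] at h
  omega

end Nat

lemma Finset.sum_add_one_div_two {ι : Type*} (s : Finset ι) (f : ι → ℕ) :
    ∑ i ∈ s, (f i + 1) / 2 = ∑ i ∈ s, f i / 2 + #{i ∈ s | Odd (f i)} := by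
  rw [card_filter, ← sum_add_distrib]
  refine sum_congr rfl fun i _ => ?_
  split_ifs with h
  · rw [Nat.odd_iff] at h; omega
  · rw [Nat.not_odd_iff] at h; omega

lemma SimpleGraph.card_edgeFinset_eq_card_filter_lt {α : Type*} [LinearOrder α] [Fintype α]
    (G : SimpleGraph α) [DecidableRel G.Adj] [Fintype G.edgeSet] :
    #G.edgeFinset = #{p : α × α | p.1 < p.2 ∧ G.Adj p.1 p.2} := by
  symm
  refine card_bij (fun p _ => s(p.1, p.2)) ?_ ?_ ?_
  · intro p hp
    simpa using (mem_filter.1 hp).2.2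
  · rintro ⟨x, y⟩ hp ⟨z, w⟩ hq h
    simp only [mem_filter, mem_univ, true_and] at hp hq
    rcases Sym2.eq_iff.1 h with ⟨rfl, rfl⟩ | ⟨rfl, rfl⟩
    · rfl
    · exact absurd hp.1 hq.1.asymm
  · intro e he
    induction e with
    | _ x y =>
      rw [mem_edgeFinset, mem_edgeSet] at he
      rcases he.ne.lt_or_gt with h | h
      · exact ⟨(x, y), by simpa using ⟨h, he⟩, rfl⟩
      · exact ⟨(y, x), by simpa using ⟨h, he.symm⟩, Sym2.eq_swap⟩

lemma Fin.card_filter_lt_sub_mem {n : ℕ} (P : ℕ → Prop) [DecidablePred P] (S : Finset ℕ)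
    (hS : ∀ d ∈ S, 0 < d) :
    #{p : Fin n × Fin n | (p.1 : ℕ) < p.2 ∧ P p.1 ∧ (p.2 : ℕ) - p.1 ∈ S}
      = ∑ d ∈ S, #{k ∈ range (n - d) | P k} := by
  rw [card_eq_sum_card_fiberwise (f := fun p => (p.2 : ℕ) - p.1) (t := S)
    fun p hp => (mem_filter.1 hp).2.2.2]
  refine sum_congr rfl fun d hd => ?_
  have hd0 := hS d hd
  refine card_bij (fun p _ => p.1) ?_ ?_ ?_
  · rintro ⟨x, y⟩ hp
    simp only [mem_filter, mem_univ, true_and] at hp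
    simp only [mem_filter, mem_range]
    exact ⟨by omega, hp.1.2.1⟩
  · rintro ⟨x, y⟩ hp ⟨z, w⟩ hq h
    simp only [mem_filter, mem_univ, true_and] at hp hq
    ext <;> simp only at h ⊢ <;> omega
  · intro k hk
    simp only [mem_filter, mem_range] at hk
    exact ⟨(⟨k, by omega⟩, ⟨k + d, by omega⟩), by simp [hk.2, hd, hd0], rfl⟩

namespace AGraph

variable {n : ℕ} {B C : Finset ℕ}

lemma aRel_iff {x y : Fin n} :
    ARel n B C x y ↔ (x : ℕ) < y ∧
      (Even (x : ℕ) ∧ (y : ℕ) - x ∈ B ∨ Odd (x : ℕ) ∧ (y : ℕ) - x ∈ C) := by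
  simp only [ARel, Nat.odd_add_one, Nat.even_add_one, Nat.not_odd_iff_even, Nat.not_even_iff_odd]

lemma adj_iff {x y : Fin n} :
    (AGraph n B C).Adj x y ↔ ARel n B C x y ∨ ARel n B C y x := by
  rw [AGraph, SimpleGraph.fromRel_adj, and_iff_right_iff_imp]
  rintro (h | h)
  exacts [Fin.ne_of_lt h.1, Fin.ne_of_gt h.1]

lemma degree_zero (hB : ∀ b ∈ B, 1 ≤ b ∧ b ≤ n - 1) (h0 : 0 < n) :
    (AGraph n B C).degree ⟨0, h0⟩ = #B := by
  rw [← SimpleGraph.card_neighborFinset_eq_degree, ← card_map Fin.valEmbedding]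
  congr 1
  ext d
  simp only [mem_map, SimpleGraph.mem_neighborFinset, adj_iff, aRel_iff, Fin.valEmbedding_apply]
  constructor
  · rintro ⟨u, ⟨_, ⟨_, h⟩ | ⟨h, _⟩⟩ | ⟨h, _⟩, rfl⟩
    · simpa using h
    · exact absurd h (by decide)
    · exact absurd h (Nat.not_lt_zero _)
  · intro hd
    have hd1 := hB d hd
    exact ⟨⟨d, by omega⟩, Or.inl ⟨by simp; omega, Or.inl ⟨Even.zero, by simpa using hd⟩⟩, rfl⟩

lemma degree_last (hB : ∀ b ∈ B, 1 ≤ b ∧ b ≤ n - 1) (hC : ∀ c ∈ C, 1 ≤ c ∧ c ≤ n - 1)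
    (h : n - 1 < n) :
    (AGraph n B C).degree ⟨n - 1, h⟩ = #{b ∈ B | Odd (n - b)} + #{c ∈ C | ¬Odd (n - c)} := by
  rw [← card_union_of_disjoint (disjoint_filter_filter_not B C _),
    ← SimpleGraph.card_neighborFinset_eq_degree]
  have hadj (u : Fin n) : (AGraph n B C).Adj ⟨n - 1, h⟩ u ↔ (u : ℕ) < n - 1 ∧
      (Even (u : ℕ) ∧ n - 1 - u ∈ B ∨ Odd (u : ℕ) ∧ n - 1 - u ∈ C) := by
    rw [adj_iff, aRel_iff, aRel_iff, or_iff_right fun hu => by simp at hu; omega]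
  have hodd (u : ℕ) (hu : u < n) : Odd (n - (n - 1 - u)) ↔ Even u := by
    rw [show n - (n - 1 - u) = u + 1 by omega, Nat.odd_add_one, Nat.not_odd_iff_even]
  have hrange (d : ℕ) (hd : d ∈ {b ∈ B | Odd (n - b)} ∪ {c ∈ C | ¬Odd (n - c)}) :
      1 ≤ d ∧ d ≤ n - 1 := by
    rcases mem_union.1 hd with hd | hd
    exacts [hB d (mem_filter.1 hd).1, hC d (mem_filter.1 hd).1]
  refine card_nbij' (fun u => n - 1 - u) (fun d => ⟨n - 1 - d, by omega⟩) ?_ ?_ ?_ ?_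
  · intro u hu
    simp only [mem_coe, SimpleGraph.mem_neighborFinset, hadj, mem_union, mem_filter,
      hodd u u.isLt, Nat.not_even_iff_odd] at hu ⊢
    tauto
  · intro d hd
    have hd1 := hrange d hd
    have hodd' := hodd (n - 1 - d) (by omega)
    simp only [mem_coe, SimpleGraph.mem_neighborFinset, hadj, mem_union, mem_filter,
      show n - 1 - (n - 1 - d) = d by omega] at hd hodd' ⊢
    simp only [hodd', Nat.not_even_iff_odd] at hd
    exact ⟨by omega, by tauto⟩
  · intro u _
    ext
    simp only
    omega
  · intro d hd
    have hd1 := hrange d hd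
    simp only
    omega

lemma card_edgeFinset (hB : ∀ b ∈ B, 1 ≤ b ∧ b ≤ n - 1) (hC : ∀ c ∈ C, 1 ≤ c ∧ c ≤ n - 1) :
    #(AGraph n B C).edgeFinset = ∑ b ∈ B, (n - b + 1) / 2 + ∑ c ∈ C, (n - c) / 2 := by
  have hsplit : #{p : Fin n × Fin n | p.1 < p.2 ∧ (AGraph n B C).Adj p.1 p.2}
      = #{p : Fin n × Fin n | (p.1 : ℕ) < p.2 ∧ Even (p.1 : ℕ) ∧ (p.2 : ℕ) - p.1 ∈ B}
        + #{p : Fin n × Fin n | (p.1 : ℕ) < p.2 ∧ Odd (p.1 : ℕ) ∧ (p.2 : ℕ) - p.1 ∈ C} := by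
    rw [← card_union_of_disjoint ?_, ← filter_or]
    · congr 1
      refine filter_congr fun p _ => ?_
      rw [adj_iff, aRel_iff, aRel_iff, Fin.lt_def]
      constructor
      · rintro ⟨hlt, ⟨-, h⟩ | ⟨h, -⟩⟩
        exacts [and_or_left.1 ⟨hlt, h⟩, absurd hlt h.asymm]
      · rintro (⟨hlt, h⟩ | ⟨hlt, h⟩)
        exacts [⟨hlt, Or.inl ⟨hlt, Or.inl h⟩⟩, ⟨hlt, Or.inl ⟨hlt, Or.inr h⟩⟩]
    · exact disjoint_filter.2 fun p _ hEven hOdd => Nat.not_even_iff_odd.2 hOdd.2.1 hEven.2.1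
  rw [SimpleGraph.card_edgeFinset_eq_card_filter_lt, hsplit,
    Fin.card_filter_lt_sub_mem _ _ fun b hb => (hB b hb).1,
    Fin.card_filter_lt_sub_mem _ _ fun c hc => (hC c hc).1]
  simp only [Nat.card_filter_even_range, Nat.card_filter_odd_range]

end AGraph

/-- For `A = A(n;B,C)` (vertices `a₁, …, a_n`, `a_i` of value `i − 1`) and `A' = A(n;C,B)`
(vertices `b₁, …, b_n`, `a'_i := b_{n−i+1}`, so `a'_i` has value `n − i`), the following are
equivalent: (i) `β(A) = γ(A)`; (ii) `|E(A)| = |E(A')|`, `deg_A a₁ = deg_{A'} a'₁` and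
`deg_A a_n = deg_{A'} a'_n`. -/
theorem stmt_13 (n : ℕ) (hn : 3 ≤ n) (B C : Finset ℕ)
    (hB : ∀ b ∈ B, 1 ≤ b ∧ b ≤ n - 1) (hC : ∀ c ∈ C, 1 ≤ c ∧ c ≤ n - 1) :
    (B.filter fun b => Odd (n - b)).card = (C.filter fun c => Odd (n - c)).card ↔
      ((AGraph n B C).edgeFinset.card = (AGraph n C B).edgeFinset.card ∧
       (AGraph n B C).degree ⟨0, by omega⟩ = (AGraph n C B).degree ⟨n - 1, by omega⟩ ∧
       (AGraph n B C).degree ⟨n - 1, by omega⟩ = (AGraph n C B).degree ⟨0, by omega⟩) := by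
  rw [AGraph.card_edgeFinset hB hC, AGraph.card_edgeFinset hC hB, AGraph.degree_zero hB,
    AGraph.degree_zero hC, AGraph.degree_last hB hC, AGraph.degree_last hC hB,
    sum_add_one_div_two B (n - ·), sum_add_one_div_two C (n - ·)]
  have hBsplit := card_filter_add_card_filter_not (s := B) (p := fun b => Odd (n - b))
  have hCsplit := card_filter_add_card_filter_not (s := C) (p := fun c => Odd (n - c))
  omega
end

section
/- Let n ≥ 3 and B, C ⊆ {1,…,n−1}, let A = A(n;B,C) with vertices a₁,…,a_n, let A' = A(n;C,B) with vertices b₁,…,b_n, set a'_i := b_{n−i+1}, and let B₀ := {b ∈ B : n−b is odd} and C₀ := {c ∈ C : n−c is odd}. Then B₀ = C₀ if and only if all of the following hold: (1) the map a_i ↦ a_{n−i+2} (i = 2,…,n) is a graph automorphism of A−a₁; (2) the map a_i ↦ a_{n−i} (i = 1,…,n−1) is a graph automorphism of A−a_n; (3) the map a_i ↦ a'_i (i = 1,…,n) is a graph isomorphism from A onto A' (in particular A ≅ A'). -/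
/-!
Every edge `a_i a_j` with `i < j` is decided by its length `d = j - i` together with the parity
of its lower end `i`, which selects whether `d` is tested against `B` or `C`. A reflection
`t ↦ m - t` keeps lengths and sends the lower end `i` to `m - j = m - i - d`, so it preserves
adjacency as long as `d` lies in both or neither of `B` and `C` whenever this parity changes.
For `m ≡ n (mod 2)` the parity changes exactly when `n - d` is odd, which is what `B₀ = C₀` says; for
`A → A'` with `m = n - 1` the roles of `B` and `C` are exchanged too, reducing it to the same
condition. Conversely, comparing the edge `a₁ a_{d+1}` of `A` with its image `b_n b_{n-d}` in
`A'` recovers `d ∈ B ↔ d ∈ C` whenever `n - d` is odd.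
-/

-- `t` is the value of the vertex `a_{t+1}`, so even `t` means an odd index and the set `B`.
def edgeLengths (B C : Finset ℕ) (t : ℕ) : Finset ℕ :=
  if Even t then B else C

lemma edgeLengths_swap (B C : Finset ℕ) (t : ℕ) :
    edgeLengths C B t = edgeLengths B C (t + 1) := by
  by_cases ht : Even t <;> simp [edgeLengths, ht, Nat.even_add_one]

lemma mem_edgeLengths_congr {B C : Finset ℕ} {t u d : ℕ}
    (h : (Even t ↔ Even u) ∨ (d ∈ B ↔ d ∈ C)) :
    d ∈ edgeLengths B C t ↔ d ∈ edgeLengths B C u := by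
  unfold edgeLengths
  split_ifs <;> tauto

lemma mem_edgeLengths_reflect {n m t d : ℕ} {B C : Finset ℕ}
    (H : ∀ ⦃d⦄, Odd (n - d) → (d ∈ B ↔ d ∈ C)) (hmn : m ≤ n) (hm : Even (n - m))
    (htd : t + d ≤ m) :
    d ∈ edgeLengths B C t ↔ d ∈ edgeLengths B C (m - (t + d)) := by
  apply mem_edgeLengths_congr
  by_cases hd : Odd (n - d)
  · exact .inr (H hd)
  · rw [Nat.not_odd_iff_even, Nat.even_iff] at hd
    rw [Nat.even_iff] at hm
    left
    simp only [Nat.even_iff]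
    omega

namespace AGraph

variable {n : ℕ} {B C : Finset ℕ}

lemma adj_of_lt {x y : Fin n} (h : x.val < y.val) :
    (AGraph n B C).Adj x y ↔ y.val - x.val ∈ edgeLengths B C x.val := by
  have hne : x ≠ y := Fin.ne_of_lt h
  have hyx : ¬ y.val < x.val := by omega
  by_cases hx : Even x.val <;>
    simp [AGraph, ARel, edgeLengths, hne, h, hyx, hx, Nat.odd_add_one, Nat.even_add_one]

lemma adj_reflect_iff {B' C' : Finset ℕ} {m : ℕ}
    (hside : ∀ t d, t + d ≤ m → (d ∈ edgeLengths B C t ↔ d ∈ edgeLengths B' C' (m - (t + d))))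
    {x y x' y' : Fin n} (hx : x.val + x'.val = m) (hy : y.val + y'.val = m) :
    (AGraph n B' C').Adj x' y' ↔ (AGraph n B C).Adj x y := by
  have key : ∀ {x y x' y' : Fin n}, x.val + x'.val = m → y.val + y'.val = m → x.val < y.val →
      ((AGraph n B' C').Adj x' y' ↔ (AGraph n B C).Adj x y) := by
    intro x y x' y' hx hy hxy
    rw [SimpleGraph.adj_comm, adj_of_lt (by omega), adj_of_lt hxy,
      show x'.val - y'.val = y.val - x.val by omega,
      show y'.val = m - (x.val + (y.val - x.val)) by omega]
    exact (hside _ _ (by omega)).symm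
  rcases lt_trichotomy x.val y.val with hxy | hxy | hxy
  · exact key hx hy hxy
  · obtain rfl : x = y := Fin.ext hxy
    obtain rfl : x' = y' := Fin.ext (by omega)
    simp
  · rw [SimpleGraph.adj_comm, SimpleGraph.adj_comm _ x]
    exact key hy hx hxy

end AGraph

lemma exists_induce_iso_of_reflection {n m : ℕ} {G G' : SimpleGraph (Fin n)} {s : Set (Fin n)}
    (hm : ∀ x ∈ s, x.val ≤ m ∧ m - x.val < n)
    (hs : ∀ x ∈ s, ∀ y : Fin n, y.val = m - x.val → y ∈ s)
    (hadj : ∀ {x y x' y' : Fin n}, x.val + x'.val = m → y.val + y'.val = m →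
      (G'.Adj x' y' ↔ G.Adj x y)) :
    ∃ ψ : G.induce s ≃g G'.induce s, ∀ x (hx : x ∈ s), (ψ ⟨x, hx⟩).1.val = m - x.val := by
  let f : s → s := fun x => ⟨⟨m - x.1.val, (hm _ x.2).2⟩, hs _ x.2 _ rfl⟩
  have hf : Function.Involutive f := fun x => by
    have := hm _ x.2
    exact Subtype.ext (Fin.ext (show m - (m - x.1.val) = x.1.val by omega))
  have hfm : ∀ x, x.1.val + (f x).1.val = m := fun x => by
    have := hm _ x.2
    exact show x.1.val + (m - x.1.val) = m by omega
  exact ⟨⟨hf.toPerm f, fun {a b} => hadj (hfm a) (hfm b)⟩, fun _ _ => rfl⟩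

lemma exists_iso_of_reflection {n m : ℕ} {G G' : SimpleGraph (Fin n)} (hmn : m + 1 = n)
    (hadj : ∀ {x y x' y' : Fin n}, x.val + x'.val = m → y.val + y'.val = m →
      (G'.Adj x' y' ↔ G.Adj x y)) :
    ∃ ψ : G ≃g G', ∀ x, (ψ x).val = m - x.val := by
  obtain ⟨ψ, hψ⟩ := exists_induce_iso_of_reflection (s := Set.univ)
    (fun x _ => ⟨by omega, by omega⟩) (fun _ _ _ _ => Set.mem_univ _) hadj
  exact ⟨G.induceUnivIso.symm.trans (ψ.trans G'.induceUnivIso), fun x => hψ x (Set.mem_univ x)⟩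

lemma mem_iff_mem_of_reflection_iso {n d : ℕ} {B C : Finset ℕ} (ψ : AGraph n B C ≃g AGraph n C B)
    (hψ : ∀ x : Fin n, (ψ x).val = n - 1 - x.val) (hd : 0 < d) (hnd : Odd (n - d)) :
    d ∈ B ↔ d ∈ C := by
  have hdn : d < n := Nat.lt_of_sub_pos hnd.pos
  let x : Fin n := ⟨0, by omega⟩
  let y : Fin n := ⟨d, hdn⟩
  have hiso := ψ.map_rel_iff (a := x) (b := y)
  rw [SimpleGraph.adj_comm, AGraph.adj_of_lt (by rw [hψ, hψ]; dsimp only [x, y]; omega),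
    AGraph.adj_of_lt (show x.val < y.val from hd)] at hiso
  have hpar : Even (n - 1 - d) := by
    rw [Nat.odd_iff] at hnd
    rw [Nat.even_iff]
    omega
  simpa [hψ, x, y, edgeLengths, hpar, show n - 1 - (n - 1 - d) = d by omega] using hiso.symm

/-- For `A = A(n;B,C)` (vertices `a₁, …, a_n`, `a_i` of value `i − 1`) and `A' = A(n;C,B)`
(vertices `b₁, …, b_n`, `a'_i := b_{n−i+1}`, so `a'_i` has value `n − i`), and
`B₀ := {b ∈ B : n−b odd}`, `C₀ := {c ∈ C : n−c odd}`: `B₀ = C₀` iff (1) the map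
`a_i ↦ a_{n−i+2}` (value `t ↦ n − t`) is an automorphism of `A − a₁`, (2) the map
`a_i ↦ a_{n−i}` (value `t ↦ n − 2 − t`) is an automorphism of `A − a_n`, and (3) the map
`a_i ↦ a'_i` (value `t ↦ n − 1 − t`) is an isomorphism from `A` onto `A'`. -/
theorem stmt_14 (n : ℕ) (hn : 3 ≤ n) (B C : Finset ℕ)
    (hB : ∀ b ∈ B, 1 ≤ b ∧ b ≤ n - 1) (hC : ∀ c ∈ C, 1 ≤ c ∧ c ≤ n - 1) :
    B.filter (fun b => Odd (n - b)) = C.filter (fun c => Odd (n - c)) ↔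
      ((∃ ψ : (AGraph n B C).induce {x : Fin n | 1 ≤ x.val} ≃g
              (AGraph n B C).induce {x : Fin n | 1 ≤ x.val},
          ∀ (x : Fin n) (hx : 1 ≤ x.val), (ψ ⟨x, hx⟩).1.1 = n - x.val) ∧
       (∃ ψ : (AGraph n B C).induce {x : Fin n | x.val < n - 1} ≃g
              (AGraph n B C).induce {x : Fin n | x.val < n - 1},
          ∀ (x : Fin n) (hx : x.val < n - 1), (ψ ⟨x, hx⟩).1.1 = n - 2 - x.val) ∧
       (∃ ψ : AGraph n B C ≃g AGraph n C B,
          ∀ x : Fin n, (ψ x).val = n - 1 - x.val)) := by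
  rw [Finset.filter_inj]
  constructor
  · intro H
    refine ⟨?_, ?_, ?_⟩
    · refine exists_induce_iso_of_reflection
        (fun x (hx : 1 ≤ x.val) => ⟨by omega, by omega⟩)
        (fun x _ y hy => show 1 ≤ y.val by omega) (AGraph.adj_reflect_iff ?_)
      exact fun t d => mem_edgeLengths_reflect H le_rfl (by simp)
    · refine exists_induce_iso_of_reflection
        (fun x (hx : x.val < n - 1) => ⟨by omega, by omega⟩)
        (fun x (hx : x.val < n - 1) y hy => show y.val < n - 1 by omega)
        (AGraph.adj_reflect_iff ?_)
      exact fun t d => mem_edgeLengths_reflect H (by omega) ⟨1, by omega⟩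
    · refine exists_iso_of_reflection (by omega) (AGraph.adj_reflect_iff fun t d htd => ?_)
      rw [edgeLengths_swap B C, show n - 1 - (t + d) + 1 = n - (t + d) by omega]
      exact mem_edgeLengths_reflect H le_rfl (by simp) (by omega)
  · rintro ⟨-, -, ψ, hψ⟩ d hd
    rcases Nat.eq_zero_or_pos d with rfl | hd0
    · exact iff_of_false (fun h => by simpa using hB 0 h) (fun h => by simpa using hC 0 h)
    · exact mem_iff_mem_of_reflection_iso ψ hψ hd0 hd
end

section
/- The graphs A(8;{1,3,4},{1,5}) and A(8;{1,5},{1,3,4}) are not isomorphic, although there exists a bijection g between their vertex sets with deg v = deg g(v) for every vertex v, and β(A(8;{1,3,4},{1,5})) = γ(A(8;{1,3,4},{1,5})). -/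
/-!
Both graphs have the same degree sequence, so a degree-preserving bijection exists, but they
are told apart by counting triangles: `A(8;{1,3,4},{1,5})` has three and `A(8;{1,5},{1,3,4})`
has four, while a graph isomorphism preserves the number of `n`-cliques.
-/

open Finset

namespace SimpleGraph

variable {V W : Type*} {G : SimpleGraph V} {H : SimpleGraph W}

theorem Iso.map_eq (e : G ≃g H) : G.map e.toEquiv.toEmbedding = H := by
  ext x y
  rw [map_adj]
  constructor
  · rintro ⟨u, v, huv, rfl, rfl⟩
    exact e.map_adj_iff.mpr huv
  · intro hxy
    exact ⟨e.symm x, e.symm y, e.symm.map_adj_iff.mpr hxy, e.apply_symm_apply x,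
      e.apply_symm_apply y⟩

theorem Iso.card_cliqueFinset_eq [Fintype V] [DecidableEq V] [DecidableRel G.Adj]
    [Fintype W] [DecidableEq W] [DecidableRel H.Adj] (e : G ≃g H) (n : ℕ) :
    #(G.cliqueFinset n) = #(H.cliqueFinset n) := by
  rw [← card_map ⟨map e.toEquiv.toEmbedding, Finset.map_injective _⟩,
    ← cliqueFinset_map_of_equiv]
  convert rfl using 3
  exact e.map_eq.symm

end SimpleGraph

theorem card_triangles_AGraph_134_15 : #((AGraph 8 {1, 3, 4} {1, 5}).cliqueFinset 3) = 3 := by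
  decide

theorem card_triangles_AGraph_15_134 : #((AGraph 8 {1, 5} {1, 3, 4}).cliqueFinset 3) = 4 := by
  decide

/-- The graphs `A(8;{1,3,4},{1,5})` and `A(8;{1,5},{1,3,4})` are not isomorphic, although
there is a degree-preserving bijection between their vertex sets and
`β(A(8;{1,3,4},{1,5})) = γ(A(8;{1,3,4},{1,5}))`. -/
theorem stmt_15 :
    IsEmpty (AGraph 8 {1, 3, 4} {1, 5} ≃g AGraph 8 {1, 5} {1, 3, 4}) ∧
    (∃ g : Fin 8 ≃ Fin 8, ∀ v : Fin 8,
      (AGraph 8 {1, 3, 4} {1, 5}).degree v = (AGraph 8 {1, 5} {1, 3, 4}).degree (g v)) ∧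
    (({1, 3, 4} : Finset ℕ).filter fun b => Odd (8 - b)).card =
      (({1, 5} : Finset ℕ).filter fun c => Odd (8 - c)).card := by
  refine ⟨⟨fun e => ?_⟩, ?_, by decide⟩
  · have hcount := e.card_cliqueFinset_eq 3
    rw [card_triangles_AGraph_134_15, card_triangles_AGraph_15_134] at hcount
    omega
  · exact ⟨⟨![2, 6, 1, 7, 3, 4, 5, 0], ![7, 2, 0, 4, 5, 6, 1, 3], by decide, by decide⟩,
      by decide⟩
end
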